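/- For any mixed state ρ on C^d ⊗ C^d, the concurrence satisfies C(ρ) ≥ max{√(2/(d(d−1))) · (d·F(ρ) − 1), 0}. -/

import Mathlib

open Matrix Complex BigOperators Finset ComplexOrder

noncomputable section

/-- The maximally entangled state `|ψ⁺⟩ = (1/√d) ∑ₖ |kk⟩` on `ℂ^d ⊗ ℂ^d`. -/
def psiPlus (d : ℕ) : (Fin d × Fin d) → ℂ :=
  fun p => if p.1 = p.2 then ((1 / Real.sqrt d : ℝ) : ℂ) else 0

/-- `U ⊗ I` acting on `ℂ^d ⊗ ℂ^d`. -/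
def tensorI {d : ℕ} (U : Matrix (Fin d) (Fin d) ℂ) :
    Matrix (Fin d × Fin d) (Fin d × Fin d) ℂ :=
  fun p q => U p.1 q.1 * (if p.2 = q.2 then 1 else 0)

/-- The rank-one projector `|ψ⟩⟨ψ|`. -/
def outer {n : Type*} [Fintype n] (ψ : n → ℂ) : Matrix n n ℂ :=
  Matrix.vecMulVec ψ (star ψ)

/-- The fully entangled fraction
`F(ρ) = max_U ⟨ψ⁺| (U† ⊗ I) ρ (U ⊗ I) |ψ⁺⟩`. -/
def fef (d : ℕ) (ρ : Matrix (Fin d × Fin d) (Fin d × Fin d) ℂ) : ℝ :=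
  sSup { x : ℝ | ∃ U ∈ Matrix.unitaryGroup (Fin d) ℂ,
    x = (star (tensorI U *ᵥ psiPlus d) ⬝ᵥ (ρ *ᵥ (tensorI U *ᵥ psiPlus d))).re }

/-- Partial trace over the second factor. -/
def ptrace2 {d : ℕ} (M : Matrix (Fin d × Fin d) (Fin d × Fin d) ℂ) :
    Matrix (Fin d) (Fin d) ℂ :=
  fun a b => ∑ k, M (a, k) (b, k)

/-- Concurrence of a pure state: `C(|ψ⟩) = √(2(1 − tr ρ_A²))`. -/
def pureConcurrence (d : ℕ) (ψ : Fin d × Fin d → ℂ) : ℝ :=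
  Real.sqrt (2 * (1 - ((ptrace2 (outer ψ) * ptrace2 (outer ψ)).trace).re))

/-- Concurrence of a mixed state via the convex roof. -/
def concurrence (d : ℕ) (ρ : Matrix (Fin d × Fin d) (Fin d × Fin d) ℂ) : ℝ :=
  sInf { x : ℝ | ∃ (n : ℕ) (p : Fin n → ℝ) (ψ : Fin n → (Fin d × Fin d → ℂ)),
    (∀ i, 0 ≤ p i) ∧ (∑ i, p i = 1) ∧ (∀ i, ∑ q, ‖ψ i q‖ ^ 2 = 1) ∧
    (ρ = ∑ i, p i • outer (ψ i)) ∧ x = ∑ i, p i * pureConcurrence d (ψ i) }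

/-!
For a pure state `ψ` with coefficient matrix `M` (so `ψ = ∑ M a b |a⟩|b⟩`) and the maximally
entangled vector `φ_U = (U ⊗ I)|ψ⁺⟩`, one has `d |⟨φ_U|ψ⟩|² = |tr(U†M)|² ≤ (∑ᵢ √λᵢ)²`, where the
`λᵢ` are the eigenvalues of `M†M`, i.e. the squared Schmidt coefficients, while
`C(ψ)² = 2 (1 - ∑ᵢ λᵢ²)`. Cauchy–Schwarz over the `d (d - 1)` off-diagonal products `√λᵢ √λⱼ`
gives `((∑ᵢ √λᵢ)² - 1)² ≤ d (d - 1) (1 - ∑ᵢ λᵢ²)`, which is the bound for pure states. Both sides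
are affine in the weights of a decomposition `ρ = ∑ pᵢ |ψᵢ⟩⟨ψᵢ|`, so the bound holds for every
decomposition and hence for the convex roof; the spectral decomposition of `ρ` shows that
decompositions exist.
-/

theorem Finset.sum_offDiag_mul {ι R : Type*} [DecidableEq ι] [CommRing R] (s : Finset ι)
    (f : ι → R) :
    ∑ p ∈ s.offDiag, f p.1 * f p.2 = (∑ i ∈ s, f i) ^ 2 - ∑ i ∈ s, f i ^ 2 := by
  rw [eq_sub_iff_add_eq, sq, sum_mul_sum, ← sum_product', ← diag_union_offDiag,
    sum_union (disjoint_diag_offDiag s), sum_diag]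
  simp only [sq, add_comm]

section SchmidtCoefficients

variable {ι : Type*} [Fintype ι] {lam : ι → ℝ}

theorem sq_sum_sqrt_sub_one_sq_le (h0 : ∀ i, 0 ≤ lam i) (h1 : ∑ i, lam i = 1) :
    ((∑ i, √(lam i)) ^ 2 - 1) ^ 2 ≤
      (Fintype.card ι * (Fintype.card ι - 1)) * (1 - ∑ i, lam i ^ 2) := by
  classical
  have hsqrt : ∑ i, √(lam i) ^ 2 = 1 := by simp only [Real.sq_sqrt (h0 _), h1]
  have hcard : ((univ : Finset ι).offDiag.card : ℝ) = Fintype.card ι * (Fintype.card ι - 1) := by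
    rw [offDiag_card, card_univ, Nat.cast_sub (Nat.le_mul_self _)]
    push_cast
    ring
  have hpairs : ∑ p ∈ (univ : Finset ι).offDiag, (√(lam p.1) * √(lam p.2)) ^ 2 =
      1 - ∑ i, lam i ^ 2 := by
    simp only [mul_pow, Real.sq_sqrt (h0 _)]
    rw [sum_offDiag_mul, h1, one_pow]
  have hoff : ∑ p ∈ (univ : Finset ι).offDiag, √(lam p.1) * √(lam p.2) =
      (∑ i, √(lam i)) ^ 2 - 1 := by
    rw [sum_offDiag_mul _ fun i => √(lam i), hsqrt]
  rw [← hoff, ← hcard, ← hpairs]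
  exact sq_sum_le_card_mul_sum_sq

theorem sqrt_two_div_mul_sq_sum_sqrt_sub_one_le (h0 : ∀ i, 0 ≤ lam i) (h1 : ∑ i, lam i = 1) :
    √(2 / (Fintype.card ι * (Fintype.card ι - 1))) * ((∑ i, √(lam i)) ^ 2 - 1) ≤
      √(2 * (1 - ∑ i, lam i ^ 2)) := by
  set D : ℝ := Fintype.card ι * (Fintype.card ι - 1)
  set X := (∑ i, √(lam i)) ^ 2 - 1
  rcases le_or_gt X 0 with hX | hX
  · exact (mul_nonpos_of_nonneg_of_nonpos (Real.sqrt_nonneg _) hX).trans (Real.sqrt_nonneg _)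
  have hbound : X ^ 2 ≤ D * (1 - ∑ i, lam i ^ 2) := sq_sum_sqrt_sub_one_sq_le h0 h1
  have hD : 0 < D := by
    have hD0 : 0 ≤ D := by
      obtain h | h := (Fintype.card ι).eq_zero_or_pos
      · simp [D, h]
      · exact mul_nonneg (Nat.cast_nonneg _) (sub_nonneg.mpr (Nat.one_le_cast.mpr h))
    refine hD0.lt_of_ne' fun hD => ?_
    rw [hD, zero_mul] at hbound
    nlinarith
  calc √(2 / D) * X = √(2 / D * X ^ 2) := by
        rw [Real.sqrt_mul' _ (sq_nonneg X), Real.sqrt_sq hX.le]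
    _ ≤ √(2 / D * (D * (1 - ∑ i, lam i ^ 2))) := by
        gcongr
    _ = √(2 * (1 - ∑ i, lam i ^ 2)) := by
        rw [← mul_assoc, div_mul_cancel₀ _ hD.ne']

end SchmidtCoefficients

theorem mul_sSup_add_le {s : Set ℝ} (hs : s.Nonempty) {a b x : ℝ} (ha : 0 ≤ a)
    (h : ∀ y ∈ s, a * y + b ≤ x) : a * sSup s + b ≤ x := by
  rw [← smul_eq_mul, ← Real.sSup_smul_of_nonneg ha, ← le_sub_iff_add_le]
  refine csSup_le hs.smul_set ?_
  rintro _ ⟨y, hy, rfl⟩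
  linarith [h y hy, smul_eq_mul a y]

namespace Matrix

variable {m n 𝕜 : Type*} [Fintype m] [RCLike 𝕜]

theorem norm_conjTranspose_mul_apply_self_le (X Y : Matrix m n 𝕜) (i : n) :
    ‖(Xᴴ * Y) i i‖ ≤ √(RCLike.re ((Xᴴ * X) i i)) * √(RCLike.re ((Yᴴ * Y) i i)) := by
  have hinner (A B : Matrix m n 𝕜) :
      (Aᴴ * B) i i = inner 𝕜 (WithLp.toLp 2 fun a => A a i) (WithLp.toLp 2 fun a => B a i) := by
    simp [mul_apply, PiLp.inner_apply, mul_comm]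
  rw [hinner, hinner, hinner, ← norm_eq_sqrt_re_inner, ← norm_eq_sqrt_re_inner]
  exact norm_inner_le_norm _ _

variable [Fintype n]

theorem trace_conjTranspose_mul_self_eq_sum (A : Matrix m n 𝕜) :
    (Aᴴ * A).trace = ∑ i, ∑ j, ((‖A i j‖ ^ 2 : ℝ) : 𝕜) := by
  rw [trace, sum_comm]
  simp [mul_apply, RCLike.conj_mul]

variable [DecidableEq n]

theorem norm_trace_conjTranspose_mul_le {U : Matrix n n 𝕜} (hU : U ∈ unitaryGroup n 𝕜)
    (M : Matrix n n 𝕜) :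
    ‖(Uᴴ * M).trace‖ ≤ ∑ i, √((isHermitian_conjTranspose_mul_self M).eigenvalues i) := by
  set hH := isHermitian_conjTranspose_mul_self M
  set V : Matrix n n 𝕜 := ↑hH.eigenvectorUnitary
  have hV : V * Vᴴ = 1 := mem_unitaryGroup_iff.mp hH.eigenvectorUnitary.2
  have hUV : (U * V)ᴴ * (U * V) = 1 :=
    mem_unitaryGroup_iff'.mp (mul_mem hU hH.eigenvectorUnitary.2)
  have hMV : (M * V)ᴴ * (M * V) = diagonal (RCLike.ofReal ∘ hH.eigenvalues) := by
    rw [← hH.conjStarAlgAut_star_eigenvectorUnitary, Unitary.conjStarAlgAut_star_apply]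
    simp [conjTranspose_mul, mul_assoc, V, star_eq_conjTranspose]
  have htrace : (Uᴴ * M).trace = ((U * V)ᴴ * (M * V)).trace := by
    rw [conjTranspose_mul, ← mul_assoc, mul_assoc Vᴴ, trace_mul_cycle, hV, one_mul]
  rw [htrace, trace]
  refine (norm_sum_le _ _).trans (sum_le_sum fun i _ => ?_)
  have := norm_conjTranspose_mul_apply_self_le (U * V) (M * V) i
  rwa [hUV, hMV, one_apply_eq, diagonal_apply_eq, RCLike.one_re, Real.sqrt_one, one_mul,
    Function.comp_apply, RCLike.ofReal_re] at this

theorem IsHermitian.trace_mul_self {A : Matrix n n 𝕜} (hA : A.IsHermitian) :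
    (A * A).trace = ∑ i, ((hA.eigenvalues i ^ 2 : ℝ) : 𝕜) := by
  conv_lhs => rw [hA.spectral_theorem, ← map_mul, Unitary.conjStarAlgAut_apply, trace_mul_cycle,
    Unitary.coe_star_mul_self, one_mul, diagonal_mul_diagonal, trace_diagonal]
  simp [sq]

theorem IsHermitian.eq_sum_eigenvalues_smul_outer {A : Matrix n n ℂ} (hA : A.IsHermitian) :
    A = ∑ j, hA.eigenvalues j • outer ⇑(hA.eigenvectorBasis j) := by
  conv_lhs => rw [hA.spectral_theorem]
  ext a b
  simp [Unitary.conjStarAlgAut_apply, mul_apply, outer, vecMulVec_apply, sum_apply, diagonal_apply,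
    star_eq_conjTranspose, mul_comm, mul_assoc]

end Matrix

section States

variable {n : Type*} [Fintype n]

theorem re_star_dotProduct_outer_mulVec (ψ φ : n → ℂ) :
    (star φ ⬝ᵥ (outer ψ *ᵥ φ)).re = ‖star φ ⬝ᵥ ψ‖ ^ 2 := by
  rw [outer, vecMulVec_mulVec, dotProduct_smul, op_smul_eq_mul, star_dotProduct ψ,
    Complex.star_def, Complex.mul_conj', ← Complex.ofReal_pow, Complex.ofReal_re]

theorem re_star_dotProduct_sum_smul_mulVec {k : ℕ} (p : Fin k → ℝ) (A : Fin k → Matrix n n ℂ)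
    (φ : n → ℂ) :
    (star φ ⬝ᵥ ((∑ i, p i • A i) *ᵥ φ)).re = ∑ i, p i * (star φ ⬝ᵥ (A i *ᵥ φ)).re := by
  simp [sum_mulVec, dotProduct_sum, smul_mulVec, Complex.re_sum]

theorem exists_pure_decomposition [DecidableEq n] {ρ : Matrix n n ℂ} (hρ : ρ.PosSemidef)
    (htr : ρ.trace = 1) :
    ∃ (k : ℕ) (p : Fin k → ℝ) (ψ : Fin k → n → ℂ),
      (∀ i, 0 ≤ p i) ∧ (∑ i, p i = 1) ∧ (∀ i, ∑ q, ‖ψ i q‖ ^ 2 = 1) ∧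
      (ρ = ∑ i, p i • outer (ψ i)) := by
  let e := Fintype.equivFin n
  refine ⟨Fintype.card n, fun i => hρ.1.eigenvalues (e.symm i),
    fun i => ⇑(hρ.1.eigenvectorBasis (e.symm i)), fun i => hρ.eigenvalues_nonneg _, ?_,
    fun i => ?_, ?_⟩
  · rw [e.symm.sum_comp (fun j => hρ.1.eigenvalues j)]
    simpa using congrArg Complex.re (hρ.1.trace_eq_sum_eigenvalues.symm.trans htr)
  · rw [← Real.sq_sqrt (sum_nonneg fun q _ => sq_nonneg _), ← EuclideanSpace.norm_eq,
      hρ.1.eigenvectorBasis.orthonormal.1, one_pow]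
  · rw [e.symm.sum_comp (fun j => hρ.1.eigenvalues j • outer ⇑(hρ.1.eigenvectorBasis j))]
    exact hρ.1.eq_sum_eigenvalues_smul_outer

end States

section PureStates

variable {d : ℕ}

def coeffMatrix (ψ : Fin d × Fin d → ℂ) : Matrix (Fin d) (Fin d) ℂ :=
  Matrix.of fun a b => ψ (a, b)

theorem ptrace2_outer (ψ : Fin d × Fin d → ℂ) :
    ptrace2 (outer ψ) = coeffMatrix ψ * (coeffMatrix ψ)ᴴ := by
  ext a b
  simp [ptrace2, outer, vecMulVec_apply, mul_apply, coeffMatrix]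

theorem pureConcurrence_eq (ψ : Fin d × Fin d → ℂ) :
    pureConcurrence d ψ = √(2 * (1 - ∑ i,
      (isHermitian_conjTranspose_mul_self (coeffMatrix ψ)).eigenvalues i ^ 2)) := by
  set M := coeffMatrix ψ
  have hcycle : (M * Mᴴ * (M * Mᴴ)).trace = (Mᴴ * M * (Mᴴ * M)).trace := by
    rw [mul_assoc, trace_mul_comm]
    simp only [mul_assoc]
  rw [pureConcurrence, ptrace2_outer, hcycle, (isHermitian_conjTranspose_mul_self M).trace_mul_self,
    Complex.re_sum]
  simp only [← RCLike.re_to_complex, RCLike.ofReal_re]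

theorem sum_eigenvalues_coeffMatrix {ψ : Fin d × Fin d → ℂ} (hψ : ∑ q, ‖ψ q‖ ^ 2 = 1) :
    ∑ i, (isHermitian_conjTranspose_mul_self (coeffMatrix ψ)).eigenvalues i = 1 := by
  have htr := (isHermitian_conjTranspose_mul_self (coeffMatrix ψ)).trace_eq_sum_eigenvalues
  rw [trace_conjTranspose_mul_self_eq_sum, ← Fintype.sum_prod_type'] at htr
  simpa [coeffMatrix, hψ, -Complex.ofReal_pow] using congrArg Complex.re htr.symm

theorem tensorI_mulVec_psiPlus (U : Matrix (Fin d) (Fin d) ℂ) (p : Fin d × Fin d) :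
    (tensorI U *ᵥ psiPlus d) p = ((1 / √d : ℝ) : ℂ) * U p.1 p.2 := by
  simp [mulVec, dotProduct, tensorI, psiPlus, Fintype.sum_prod_type, mul_comm]

theorem star_tensorI_mulVec_psiPlus_dotProduct (U : Matrix (Fin d) (Fin d) ℂ)
    (ψ : Fin d × Fin d → ℂ) :
    star (tensorI U *ᵥ psiPlus d) ⬝ᵥ ψ = ((1 / √d : ℝ) : ℂ) * (Uᴴ * coeffMatrix ψ).trace := by
  simp only [dotProduct, Pi.star_apply, tensorI_mulVec_psiPlus, star_mul', RCLike.star_def,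
    conj_ofReal, mul_assoc, Fintype.sum_prod_type, trace, coeffMatrix, diag_apply, mul_apply,
    conjTranspose_apply, of_apply, mul_sum]
  exact sum_comm

theorem sqrt_two_div_mul_sub_one_le_pureConcurrence {ψ : Fin d × Fin d → ℂ}
    (hψ : ∑ q, ‖ψ q‖ ^ 2 = 1) {U : Matrix (Fin d) (Fin d) ℂ} (hU : U ∈ unitaryGroup (Fin d) ℂ) :
    √(2 / (d * (d - 1))) *
        (d * (star (tensorI U *ᵥ psiPlus d) ⬝ᵥ (outer ψ *ᵥ (tensorI U *ᵥ psiPlus d))).re - 1) ≤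
      pureConcurrence d ψ := by
  set hH := isHermitian_conjTranspose_mul_self (coeffMatrix ψ)
  have hd : (d : ℝ) ≠ 0 := Nat.cast_ne_zero.mpr <| by rintro rfl; simp at hψ
  have hfidelity : d * (star (tensorI U *ᵥ psiPlus d) ⬝ᵥ
      (outer ψ *ᵥ (tensorI U *ᵥ psiPlus d))).re = ‖(Uᴴ * coeffMatrix ψ).trace‖ ^ 2 := by
    rw [re_star_dotProduct_outer_mulVec, star_tensorI_mulVec_psiPlus_dotProduct, norm_mul, mul_pow,
      Complex.norm_real, Real.norm_eq_abs, sq_abs, div_pow, Real.sq_sqrt (Nat.cast_nonneg d)]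
    field_simp
  have htrace : ‖(Uᴴ * coeffMatrix ψ).trace‖ ^ 2 ≤ (∑ i, √(hH.eigenvalues i)) ^ 2 :=
    pow_le_pow_left₀ (norm_nonneg _) (norm_trace_conjTranspose_mul_le hU _) 2
  calc _ ≤ √(2 / (d * (d - 1))) * ((∑ i, √(hH.eigenvalues i)) ^ 2 - 1) := by
        rw [hfidelity]; gcongr
    _ ≤ √(2 * (1 - ∑ i, hH.eigenvalues i ^ 2)) := by
        simpa using sqrt_two_div_mul_sq_sum_sqrt_sub_one_le
          (eigenvalues_conjTranspose_mul_self_nonneg _) (sum_eigenvalues_coeffMatrix hψ)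
    _ = pureConcurrence d ψ := (pureConcurrence_eq ψ).symm

theorem sqrt_two_div_mul_sub_one_le_sum_mul_pureConcurrence {k : ℕ} {p : Fin k → ℝ}
    {ψ : Fin k → Fin d × Fin d → ℂ} (hp : ∀ i, 0 ≤ p i) (hp1 : ∑ i, p i = 1)
    (hψ : ∀ i, ∑ q, ‖ψ i q‖ ^ 2 = 1) {U : Matrix (Fin d) (Fin d) ℂ}
    (hU : U ∈ unitaryGroup (Fin d) ℂ) :
    √(2 / (d * (d - 1))) * (d * (star (tensorI U *ᵥ psiPlus d) ⬝ᵥ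
        ((∑ i, p i • outer (ψ i)) *ᵥ (tensorI U *ᵥ psiPlus d))).re - 1) ≤
      ∑ i, p i * pureConcurrence d (ψ i) := by
  set φ := tensorI U *ᵥ psiPlus d
  calc _ = √(2 / (d * (d - 1))) *
        (d * ∑ i, p i * (star φ ⬝ᵥ (outer (ψ i) *ᵥ φ)).re - ∑ i, p i) := by
        rw [re_star_dotProduct_sum_smul_mulVec, hp1]
    _ = ∑ i, p i * (√(2 / (d * (d - 1))) * (d * (star φ ⬝ᵥ (outer (ψ i) *ᵥ φ)).re - 1)) := by
        rw [mul_sum, mul_sub, mul_sum, mul_sum, ← sum_sub_distrib]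
        exact sum_congr rfl fun i _ => by ring
    _ ≤ _ := sum_le_sum fun i _ => mul_le_mul_of_nonneg_left
        (sqrt_two_div_mul_sub_one_le_pureConcurrence (hψ i) hU) (hp i)

end PureStates

theorem concurrence_ge_fef_general (d : ℕ)
    (ρ : Matrix (Fin d × Fin d) (Fin d × Fin d) ℂ)
    (hpsd : ρ.PosSemidef) (htr : ρ.trace = 1) :
    concurrence d ρ ≥
      max (Real.sqrt (2 / (d * (d - 1))) * (d * fef d ρ - 1)) 0 := by
  refine le_csInf ?_ ?_
  · obtain ⟨k, p, ψ, hp, hp1, hψ, hρ⟩ := exists_pure_decomposition hpsd htr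
    exact ⟨_, k, p, ψ, hp, hp1, hψ, hρ, rfl⟩
  rintro _ ⟨k, p, ψ, hp, hp1, hψ, rfl, rfl⟩
  refine max_le ?_ (sum_nonneg fun i _ => mul_nonneg (hp i) (Real.sqrt_nonneg _))
  set c := √(2 / (d * (d - 1)))
  calc c * (d * fef d _ - 1) = (c * d) * fef d _ + -c := by ring
    _ ≤ _ := by
      rw [fef]
      refine mul_sSup_add_le ?_ (by positivity) ?_
      · exact ⟨_, 1, one_mem _, rfl⟩
      rintro _ ⟨U, hU, rfl⟩
      linarith [sqrt_two_div_mul_sub_one_le_sum_mul_pureConcurrence hp hp1 hψ hU]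

/-- `C(ρ) ≥ max{√(2/(d(d−1))) (d F(ρ) − 1), 0}`. -/
theorem concurrence_ge_fef (d : ℕ) (hd : 2 ≤ d)
    (ρ : Matrix (Fin d × Fin d) (Fin d × Fin d) ℂ)
    (hpsd : ρ.PosSemidef) (htr : ρ.trace = 1) :
    concurrence d ρ ≥
      max (Real.sqrt (2 / (d * (d - 1))) * (d * fef d ρ - 1)) 0 :=
  concurrence_ge_fef_general d ρ hpsd htr
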